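/- arXiv:2601.05875 — 2 statements merged into one kernel-verified Lean document; each statement's English description precedes it below -/
import Mathlib

section
/- For any measurable regime d: X → {0,1}, the identity V(d*) - V(d) = E[ |τ(X)| · (1{τ(X) > 0} - d(X))² ] holds, where d*(x) = 1{τ(x)>0}. Hence maximizing the value V(d) over regimes is equivalent to minimizing the weighted classification risk R(d) = E[ |τ(X)| · (1{τ(X)>0} - d(X))² ]. -/
open MeasureTheory

/-- Value maximization is equivalent to weighted classification risk minimization:
`V(d*) - V(d) = E[|τ(X)| · (1{τ(X) > 0} - d(X))²]` for any regime `d`, where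
`d*(x) = 1{τ(x) > 0}`. -/
theorem value_diff_eq_weighted_classification_risk
    {Ω 𝓧 : Type*} [MeasurableSpace Ω] [MeasurableSpace 𝓧]
    (μ : Measure Ω) [IsProbabilityMeasure μ]
    (X : Ω → 𝓧) (Y0 Y1 : Ω → ℝ)
    (hX : Measurable X) (hY0 : Integrable Y0 μ) (hY1 : Integrable Y1 μ)
    (τ : 𝓧 → ℝ) (hτ : Measurable τ)
    (hτdef : μ[(fun ω => Y1 ω - Y0 ω) | MeasurableSpace.comap X inferInstance]
      =ᵐ[μ] fun ω => τ (X ω))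
    (dstar : 𝓧 → ℝ) (hdstar : ∀ x, dstar x = if 0 < τ x then 1 else 0)
    (d : 𝓧 → ℝ) (hd : Measurable d) (hdbin : ∀ x, d x = 0 ∨ d x = 1) :
    (∫ ω, (dstar (X ω) * Y1 ω + (1 - dstar (X ω)) * Y0 ω) ∂μ) -
        (∫ ω, (d (X ω) * Y1 ω + (1 - d (X ω)) * Y0 ω) ∂μ)
      = ∫ ω, |τ (X ω)| * ((if 0 < τ (X ω) then (1:ℝ) else 0) - d (X ω)) ^ 2 ∂μ := by
  have hm := hX.comap_le
  have hdstar_meas : Measurable dstar := by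
    have : dstar = fun x => if 0 < τ x then (1:ℝ) else 0 := funext hdstar
    rw [this]
    exact Measurable.ite (measurableSet_lt measurable_const hτ) measurable_const measurable_const
  -- f : the σ(X)-measurable bounded factor
  set f : Ω → ℝ := fun ω => dstar (X ω) - d (X ω) with hf_def
  have hXm : Measurable[MeasurableSpace.comap X inferInstance] X :=
    Measurable.of_comap_le le_rfl
  have hf_m : Measurable[MeasurableSpace.comap X inferInstance] f :=
    ((hdstar_meas.sub hd).comp hXm)
  have hf_meas : Measurable f := (hdstar_meas.sub hd).comp hX
  have hf_bdd : ∀ ω, ‖f ω‖ ≤ 2 := by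
    intro ω
    rcases hdbin (X ω) with h | h <;>
      simp only [hf_def, hdstar (X ω), h, Real.norm_eq_abs] <;>
      split <;> norm_num
  set g : Ω → ℝ := fun ω => Y1 ω - Y0 ω with hg_def
  have hg_int : Integrable g μ := hY1.sub hY0
  have hfg_int : Integrable (fun ω => f ω * g ω) μ := by
    have := hg_int.bdd_mul hf_meas.aestronglyMeasurable (c := 2) (Filter.Eventually.of_forall hf_bdd)
    simpa using this
  -- integrability of the two value integrands
  have hint1 : Integrable (fun ω => dstar (X ω) * Y1 ω + (1 - dstar (X ω)) * Y0 ω) μ := by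
    refine Integrable.add ?_ ?_
    · exact hY1.bdd_mul (hdstar_meas.comp hX).aestronglyMeasurable
        (c := 1) (Filter.Eventually.of_forall fun ω => by simp only [hdstar (X ω), Real.norm_eq_abs]; split <;> norm_num)
    · exact hY0.bdd_mul ((measurable_const.sub (hdstar_meas.comp hX)).aestronglyMeasurable)
        (c := 1) (Filter.Eventually.of_forall fun ω => by simp only [hdstar (X ω), Real.norm_eq_abs]; split <;> norm_num)
  have hint2 : Integrable (fun ω => d (X ω) * Y1 ω + (1 - d (X ω)) * Y0 ω) μ := by
    refine Integrable.add ?_ ?_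
    · exact hY1.bdd_mul (hd.comp hX).aestronglyMeasurable
        (c := 1) (Filter.Eventually.of_forall fun ω => by rcases hdbin (X ω) with h | h <;> simp [h])
    · exact hY0.bdd_mul ((measurable_const.sub (hd.comp hX)).aestronglyMeasurable)
        (c := 1) (Filter.Eventually.of_forall fun ω => by rcases hdbin (X ω) with h | h <;> simp [h])
  have step1 : (∫ ω, (dstar (X ω) * Y1 ω + (1 - dstar (X ω)) * Y0 ω) ∂μ) -
      (∫ ω, (d (X ω) * Y1 ω + (1 - d (X ω)) * Y0 ω) ∂μ) = ∫ ω, f ω * g ω ∂μ := by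
    rw [← integral_sub hint1 hint2]
    apply integral_congr_ae
    filter_upwards with ω
    simp only [hf_def, hg_def]
    ring
  -- pull out f through conditional expectation
  have hcond : μ[fun ω => f ω * g ω | MeasurableSpace.comap X inferInstance]
      =ᵐ[μ] fun ω => f ω * (μ[g | MeasurableSpace.comap X inferInstance]) ω :=
    condExp_mul_of_stronglyMeasurable_left (hf_m.stronglyMeasurable) hfg_int hg_int
  have step2 : ∫ ω, f ω * g ω ∂μ = ∫ ω, f ω * τ (X ω) ∂μ := by
    rw [← integral_condExp hm (f := fun ω => f ω * g ω)]
    refine integral_congr_ae (hcond.trans ?_)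
    filter_upwards [hτdef] with ω hω
    rw [hω]
  rw [step1, step2]
  apply integral_congr_ae
  filter_upwards with ω
  by_cases ht : 0 < τ (X ω)
  · rw [if_pos ht, abs_of_pos ht]
    rcases hdbin (X ω) with h | h <;> simp [hf_def, hdstar (X ω), if_pos ht, h]
  · rw [if_neg ht, abs_of_nonpos (not_lt.mp ht)]
    rcases hdbin (X ω) with h | h <;> simp [hf_def, hdstar (X ω), if_neg ht, h]
end

section
/- Under no unmeasured confounders and positivity, if either the propensity model is correct (ê = e) or the outcome model is correct (μ̂(·,a) = E[Y(a)|X=·] for a ∈ {0,1}), then the AIPW contrast estimator τ̂(X, A, Y) = A(Y - μ̂(X,1))/ê(X) - (1-A)(Y - μ̂(X,0))/(1-ê(X)) + μ̂(X,1) - μ̂(X,0) satisfies E[τ̂(X,A,Y) | X] = E[Y(1) - Y(0) | X] almost surely (double robustness). -/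
open MeasureTheory ProbabilityTheory MeasurableSpace

section Key
variable {Ω : Type*} {m' m'' : MeasurableSpace Ω} [mΩ : MeasurableSpace Ω] [StandardBorelSpace Ω]
  {μ : Measure Ω} [IsProbabilityMeasure μ]

lemma condexp_binary_sup_comap (hm' : m' ≤ mΩ)
    (A : Ω → ℝ) (hA : Measurable A) (hAbin : ∀ ω, A ω = 0 ∨ A ω = 1)
    (f : Ω → ℝ) (hf : Measurable f)
    (hindep : CondIndepFun m' hm' f A μ)
    (hm''eq : m'' = m' ⊔ MeasurableSpace.comap f inferInstance) :
    μ[A|m''] =ᵐ[μ] μ[A|m'] := by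
  have hSdef : True := trivial
  set S : Set Ω := A ⁻¹' {1} with hSdef
  have hS : MeasurableSet S := hA (measurableSet_singleton 1)
  have hAeq : A = S.indicator (fun _ => (1:ℝ)) := by
    funext ω
    rcases hAbin ω with h | h
    · simp [Set.indicator_apply, hSdef, Set.mem_preimage, h]
    · simp [Set.indicator_apply, hSdef, Set.mem_preimage, h]
  have hAint : Integrable A μ := by
    rw [hAeq]; exact (integrable_const (1:ℝ)).indicator hS
  set κ : Ω → ℝ := μ[A|m'] with hκdef
  have hκ_sm : StronglyMeasurable[m'] κ := stronglyMeasurable_condExp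
  have hκ_nonneg : 0 ≤ᵐ[μ] κ := condExp_nonneg (by
    refine Filter.Eventually.of_forall fun ω => ?_
    rcases hAbin ω with h | h <;> simp [h])
  have hκ_le_one : κ ≤ᵐ[μ] fun _ => (1:ℝ) := by
    have h1 : μ[fun _ => (1:ℝ)|m'] = fun _ => (1:ℝ) := condExp_const hm' 1
    have := condExp_mono (μ := μ) (m := m') hAint (integrable_const (1:ℝ))
      (Filter.Eventually.of_forall fun ω => by rcases hAbin ω with h | h <;> simp [h])
    rw [h1] at this
    exact this
  have hκ_bd : ∀ᵐ ω ∂μ, ‖κ ω‖ ≤ 1 := by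
    filter_upwards [hκ_nonneg, hκ_le_one] with ω h0 h1
    simp only [Pi.zero_apply] at h0
    rw [Real.norm_eq_abs, abs_le]
    exact ⟨by linarith, h1⟩
  have hm'' : m'' ≤ mΩ := hm''eq ▸ sup_le hm' hf.comap_le
  -- π-system generating m''
  set C : Set (Set Ω) :=
    {s | ∃ b, MeasurableSet[m'] b ∧ ∃ t, MeasurableSet t ∧ s = b ∩ f ⁻¹' t} with hCdef
  have hgen : m'' = MeasurableSpace.generateFrom C := by
    rw [hm''eq]
    refine le_antisymm ?_ ?_
    · refine sup_le ?_ ?_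
      · intro b hb
        exact measurableSet_generateFrom ⟨b, hb, Set.univ, MeasurableSet.univ, by simp⟩
      · rintro s ⟨t, ht, rfl⟩
        exact measurableSet_generateFrom ⟨Set.univ, MeasurableSet.univ, t, ht, by simp⟩
    · refine generateFrom_le ?_
      rintro s ⟨b, hb, t, ht, rfl⟩
      exact MeasurableSet.inter (le_sup_left (α := MeasurableSpace Ω) _ hb)
        (le_sup_right (α := MeasurableSpace Ω) _ ⟨t, ht, rfl⟩)
  have hpi : IsPiSystem C := by
    rintro s ⟨b1, hb1, t1, ht1, rfl⟩ u ⟨b2, hb2, t2, ht2, rfl⟩ -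
    exact ⟨b1 ∩ b2, hb1.inter hb2, t1 ∩ t2, ht1.inter ht2, by
      ext ω; simp [Set.mem_inter_iff]; tauto⟩
  have hCI := (condIndepFun_iff_condExp_inter_preimage_eq_mul (hm' := hm') hf hA).mp hindep
  have hκS : μ⟦S|m'⟧ = κ := by rw [hκdef, hAeq]
  have claim : ∀ s, MeasurableSet[m''] s →
      ∫ ω in s, A ω ∂μ = ∫ ω in s, κ ω ∂μ := by
    have h_basic : ∀ s ∈ C, ∫ ω in s, A ω ∂μ = ∫ ω in s, κ ω ∂μ := by
      rintro s ⟨b, hb, t, ht, rfl⟩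
      have hbm : MeasurableSet[mΩ] b := hm' _ hb
      have hT : MeasurableSet[mΩ] (f ⁻¹' t) := hf ht
      have hCI' : (μ⟦f ⁻¹' t ∩ S|m'⟧) =ᵐ[μ]
          fun ω => (μ⟦f ⁻¹' t|m'⟧) ω * κ ω := by
        have := hCI t {1} ht (measurableSet_singleton 1)
        rw [hκS] at this
        exact this
      have hindTS : ((f ⁻¹' t).indicator A) = ((f ⁻¹' t ∩ S).indicator (fun _ => (1:ℝ))) := by
        funext ω
        by_cases hω : ω ∈ f ⁻¹' t
        · rcases hAbin ω with h | h
          · simp [Set.indicator_apply, hω, h, Set.mem_inter_iff, hSdef, Set.mem_preimage]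
          · simp [Set.indicator_apply, hω, h, Set.mem_inter_iff, hSdef, Set.mem_preimage]
        · simp [Set.indicator_apply, hω, Set.mem_inter_iff]
      have hindint : Integrable ((f ⁻¹' t ∩ S).indicator (fun _ => (1:ℝ))) μ :=
        (integrable_const (1:ℝ)).indicator (hT.inter hS)
      have h1T_int : Integrable ((f ⁻¹' t).indicator (fun _ => (1:ℝ))) μ :=
        (integrable_const (1:ℝ)).indicator hT
      have hpull : μ[fun ω => κ ω * (f ⁻¹' t).indicator (fun _ => (1:ℝ)) ω|m']
          =ᵐ[μ] fun ω => κ ω * (μ⟦f ⁻¹' t|m'⟧) ω :=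
        condExp_stronglyMeasurable_mul_of_bound hm' hκ_sm h1T_int 1 hκ_bd
      calc ∫ ω in b ∩ f ⁻¹' t, A ω ∂μ
          = ∫ ω in b, (f ⁻¹' t).indicator A ω ∂μ := (setIntegral_indicator hT).symm
        _ = ∫ ω in b, (f ⁻¹' t ∩ S).indicator (fun _ => (1:ℝ)) ω ∂μ := by rw [hindTS]
        _ = ∫ ω in b, (μ⟦f ⁻¹' t ∩ S|m'⟧) ω ∂μ := (setIntegral_condExp hm' hindint hb).symm
        _ = ∫ ω in b, (μ⟦f ⁻¹' t|m'⟧) ω * κ ω ∂μ := setIntegral_congr_ae hbm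
            (hCI'.mono fun ω h _ => h)
        _ = ∫ ω in b, κ ω * (f ⁻¹' t).indicator (fun _ => (1:ℝ)) ω ∂μ := by
            rw [← setIntegral_condExp hm'
              (h1T_int.bdd_mul (hκ_sm.mono hm').aestronglyMeasurable hκ_bd) hb]
            refine setIntegral_congr_ae hbm ?_
            filter_upwards [hpull] with ω h _
            rw [h, mul_comm]
        _ = ∫ ω in b, (f ⁻¹' t).indicator κ ω ∂μ := by
            refine setIntegral_congr_ae hbm (Filter.Eventually.of_forall fun ω _ => ?_)
            by_cases hω : ω ∈ f ⁻¹' t <;> simp [Set.indicator_apply, hω]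
        _ = ∫ ω in b ∩ f ⁻¹' t, κ ω ∂μ := setIntegral_indicator hT
    have hκint : Integrable κ μ := integrable_condExp
    intro s hs
    refine MeasurableSpace.induction_on_inter (m := m'')
      (C := fun s _ => ∫ ω in s, A ω ∂μ = ∫ ω in s, κ ω ∂μ) hgen hpi ?_ h_basic ?_ ?_ s hs
    · simp
    · intro t htm hteq
      have htm0 : MeasurableSet[mΩ] t := hm'' _ htm
      have h1 := integral_add_compl htm0 hAint
      have h2 := integral_add_compl htm0 hκint
      have h3 : ∫ ω, A ω ∂μ = ∫ ω, κ ω ∂μ := (integral_condExp hm').symm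
      linarith
    · intro g hdisj hgm hgeq
      have hgm0 : ∀ i, MeasurableSet[mΩ] (g i) := fun i => hm'' _ (hgm i)
      rw [integral_iUnion hgm0 hdisj hAint.integrableOn,
        integral_iUnion hgm0 hdisj hκint.integrableOn]
      exact tsum_congr hgeq
  refine (ae_eq_condExp_of_forall_setIntegral_eq hm'' hAint
    (fun s _ _ => integrable_condExp.integrableOn)
    (fun s hs _ => (claim s hs).symm)
    ((stronglyMeasurable_condExp.mono (hm''eq ▸ le_sup_left)).aestronglyMeasurable)).symm

lemma condexp_mul_binary_of_condIndepFun (hm' : m' ≤ mΩ)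
    (A : Ω → ℝ) (hA : Measurable A) (hAbin : ∀ ω, A ω = 0 ∨ A ω = 1)
    (f : Ω → ℝ) (hf : Measurable f) (hfint : Integrable f μ)
    (hindep : CondIndepFun m' hm' f A μ) :
    μ[fun ω => f ω * A ω | m'] =ᵐ[μ] fun ω => (μ[A|m']) ω * (μ[f|m']) ω := by
  have hAint : Integrable A μ := by
    refine Integrable.mono' (integrable_const (1:ℝ)) hA.aestronglyMeasurable ?_
    refine Filter.Eventually.of_forall fun ω => ?_
    rcases hAbin ω with h | h <;> simp [h]
  have hκ_sm : StronglyMeasurable[m'] (μ[A|m']) := stronglyMeasurable_condExp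
  have hκ_nonneg : 0 ≤ᵐ[μ] μ[A|m'] := condExp_nonneg (by
    refine Filter.Eventually.of_forall fun ω => ?_
    rcases hAbin ω with h | h <;> simp [h])
  have hκ_le_one : μ[A|m'] ≤ᵐ[μ] fun _ => (1:ℝ) := by
    have h1 : μ[fun _ => (1:ℝ)|m'] = fun _ => (1:ℝ) := condExp_const hm' 1
    have := condExp_mono (μ := μ) (m := m') hAint (integrable_const (1:ℝ))
      (Filter.Eventually.of_forall fun ω => by rcases hAbin ω with h | h <;> simp [h])
    rw [h1] at this
    exact this
  have hκ_bd : ∀ᵐ ω ∂μ, ‖(μ[A|m']) ω‖ ≤ 1 := by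
    filter_upwards [hκ_nonneg, hκ_le_one] with ω h0 h1
    simp only [Pi.zero_apply] at h0
    rw [Real.norm_eq_abs, abs_le]
    exact ⟨by linarith, h1⟩
  have hfA_int : Integrable (fun ω => f ω * A ω) μ := by
    refine Integrable.mono' hfint.norm ((hf.mul hA).aestronglyMeasurable) ?_
    refine Filter.Eventually.of_forall fun ω => ?_
    rcases hAbin ω with h | h <;> simp [h, abs_nonneg]
  have hm'' : m' ⊔ MeasurableSpace.comap f inferInstance ≤ mΩ := sup_le hm' hf.comap_le
  have hf_sm'' : StronglyMeasurable[m' ⊔ MeasurableSpace.comap f inferInstance] f := by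
    have h0 : Measurable[MeasurableSpace.comap f inferInstance] f :=
      Measurable.of_comap_le le_rfl
    exact (h0.mono (le_sup_right (a := m')) le_rfl).stronglyMeasurable
  have hstep1 : μ[A|m' ⊔ MeasurableSpace.comap f inferInstance] =ᵐ[μ] μ[A|m'] :=
    condexp_binary_sup_comap hm' A hA hAbin f hf hindep rfl
  have c1 : μ[fun ω => f ω * A ω|m'] =ᵐ[μ]
      μ[μ[fun ω => f ω * A ω|m' ⊔ MeasurableSpace.comap f inferInstance]|m'] :=
    (condExp_condExp_of_le le_sup_left hm'').symm
  have c2 : μ[fun ω => f ω * A ω|m' ⊔ MeasurableSpace.comap f inferInstance] =ᵐ[μ]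
      fun ω => f ω * (μ[A|m' ⊔ MeasurableSpace.comap f inferInstance]) ω :=
    condExp_mul_of_stronglyMeasurable_left hf_sm'' hfA_int hAint
  have c3 : μ[fun ω => f ω * A ω|m' ⊔ MeasurableSpace.comap f inferInstance] =ᵐ[μ]
      fun ω => (μ[A|m']) ω * f ω := by
    refine c2.trans ?_
    filter_upwards [hstep1] with ω h
    rw [h, mul_comm]
  have c4 : μ[fun ω => (μ[A|m']) ω * f ω|m'] =ᵐ[μ] fun ω => (μ[A|m']) ω * (μ[f|m']) ω :=
    condExp_stronglyMeasurable_mul_of_bound hm' hκ_sm hfint 1 hκ_bd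
  exact c1.trans ((condExp_congr_ae c3).trans c4)


lemma condExp_add5 (P1 P2 P3 P4 P5 : Ω → ℝ) (h1 : Integrable P1 μ) (h2 : Integrable P2 μ)
    (h3 : Integrable P3 μ) (h4 : Integrable P4 μ) (h5 : Integrable P5 μ) :
    μ[fun ω => P1 ω + P2 ω + P3 ω + P4 ω + P5 ω|m'] =ᵐ[μ]
      fun ω => (μ[P1|m']) ω + (μ[P2|m']) ω + (μ[P3|m']) ω + (μ[P4|m']) ω + (μ[P5|m']) ω := by
  have e4 : μ[fun ω => P1 ω + P2 ω + P3 ω + P4 ω|m'] =ᵐ[μ]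
      fun ω => (μ[P1|m']) ω + (μ[P2|m']) ω + (μ[P3|m']) ω + (μ[P4|m']) ω := by
    have e3 : μ[fun ω => P1 ω + P2 ω + P3 ω|m'] =ᵐ[μ]
        fun ω => (μ[P1|m']) ω + (μ[P2|m']) ω + (μ[P3|m']) ω := by
      have e2 : μ[fun ω => P1 ω + P2 ω|m'] =ᵐ[μ] fun ω => (μ[P1|m']) ω + (μ[P2|m']) ω :=
        condExp_add h1 h2 _
      have := condExp_add (h1.add h2) h3 (m := m')
      refine this.trans ?_
      filter_upwards [e2] with ω hω
      simp only [Pi.add_apply]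
      show (μ[fun ω => P1 ω + P2 ω|m']) ω + (μ[P3|m']) ω = _
      rw [hω]
    have := condExp_add ((h1.add h2).add h3) h4 (m := m')
    refine this.trans ?_
    filter_upwards [e3] with ω hω
    simp only [Pi.add_apply]
    show (μ[fun ω => P1 ω + P2 ω + P3 ω|m']) ω + (μ[P4|m']) ω = _
    rw [hω]
  have := condExp_add (((h1.add h2).add h3).add h4) h5 (m := m')
  refine this.trans ?_
  filter_upwards [e4] with ω hω
  simp only [Pi.add_apply]
  show (μ[fun ω => P1 ω + P2 ω + P3 ω + P4 ω|m']) ω + (μ[P5|m']) ω = _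
  rw [hω]

end Key


/-- Double robustness of the AIPW contrast estimator: under no-unmeasured-confounders and
positivity, if either the propensity model `ê` or the outcome model `μ̂(·,a)` is correct,
then `E[τ̂(X,A,Y) | X] = E[Y(1) - Y(0) | X]` a.s. -/
theorem aipw_contrast_doubly_robust
    {Ω 𝓧 : Type*} [MeasurableSpace Ω] [StandardBorelSpace Ω] [MeasurableSpace 𝓧]
    (μ : Measure Ω) [IsProbabilityMeasure μ]
    (X : Ω → 𝓧) (A : Ω → ℝ) (Y0 Y1 : Ω → ℝ)
    (hX : Measurable X) (hA : Measurable A) (hY0 : Measurable Y0) (hY1 : Measurable Y1)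
    (hAbin : ∀ ω, A ω = 0 ∨ A ω = 1)
    (e : 𝓧 → ℝ) (he : Measurable e)
    (hpos : ∀ᵐ ω ∂μ, 0 < e (X ω) ∧ e (X ω) < 1)
    (hedef : μ[A | MeasurableSpace.comap X inferInstance] =ᵐ[μ] fun ω => e (X ω))
    (hNUC0 : CondIndepFun (MeasurableSpace.comap X inferInstance) hX.comap_le Y0 A μ)
    (hNUC1 : CondIndepFun (MeasurableSpace.comap X inferInstance) hX.comap_le Y1 A μ)
    (Y : Ω → ℝ) (hYdef : ∀ ω, Y ω = A ω * Y1 ω + (1 - A ω) * Y0 ω)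
    -- working models: propensity `ehat`, outcome regressions `m1`, `m0`
    (ehat m1 m0 : 𝓧 → ℝ) (hehat : Measurable ehat) (hm1 : Measurable m1) (hm0 : Measurable m0)
    (hehatpos : ∀ᵐ ω ∂μ, 0 < ehat (X ω) ∧ ehat (X ω) < 1)
    -- double robustness hypothesis: either model is correctly specified
    (hmodels :
      (∀ᵐ ω ∂μ, ehat (X ω) = e (X ω)) ∨
      ((μ[Y1 | MeasurableSpace.comap X inferInstance] =ᵐ[μ] fun ω => m1 (X ω)) ∧
        (μ[Y0 | MeasurableSpace.comap X inferInstance] =ᵐ[μ] fun ω => m0 (X ω))))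
    -- integrability
    (hY0int : Integrable Y0 μ) (hY1int : Integrable Y1 μ)
    (hτint : Integrable (fun ω =>
      A ω * (Y ω - m1 (X ω)) / ehat (X ω) -
        (1 - A ω) * (Y ω - m0 (X ω)) / (1 - ehat (X ω)) + m1 (X ω) - m0 (X ω)) μ) :
    μ[(fun ω =>
        A ω * (Y ω - m1 (X ω)) / ehat (X ω) -
          (1 - A ω) * (Y ω - m0 (X ω)) / (1 - ehat (X ω)) + m1 (X ω) - m0 (X ω))
      | MeasurableSpace.comap X inferInstance]
      =ᵐ[μ] μ[(fun ω => Y1 ω - Y0 ω) | MeasurableSpace.comap X inferInstance] := by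
  classical
  have hm' := hX.comap_le
  have hXm : Measurable[MeasurableSpace.comap X inferInstance] X := Measurable.of_comap_le le_rfl
  have hφm : ∀ g : 𝓧 → ℝ, Measurable g →
      StronglyMeasurable[MeasurableSpace.comap X inferInstance] (fun ω => g (X ω)) :=
    fun g hg => (hg.comp hXm).stronglyMeasurable
  set φ1 : Ω → ℝ := fun ω => (ehat (X ω))⁻¹ with hφ1
  set φ2 : Ω → ℝ := fun ω => -((ehat (X ω))⁻¹ * m1 (X ω)) with hφ2
  set φ3 : Ω → ℝ := fun ω => -(1 - ehat (X ω))⁻¹ with hφ3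
  set φ4 : Ω → ℝ := fun ω => (1 - ehat (X ω))⁻¹ * m0 (X ω) with hφ4
  set φ5 : Ω → ℝ := fun ω => m1 (X ω) - m0 (X ω) with hφ5
  have hφ1m : StronglyMeasurable[MeasurableSpace.comap X inferInstance] φ1 := hφm _ hehat.inv
  have hφ2m : StronglyMeasurable[MeasurableSpace.comap X inferInstance] φ2 := hφm _ ((hehat.inv.mul hm1).neg)
  have hφ3m : StronglyMeasurable[MeasurableSpace.comap X inferInstance] φ3 := hφm _ ((measurable_const.sub hehat).inv.neg)
  have hφ4m : StronglyMeasurable[MeasurableSpace.comap X inferInstance] φ4 := hφm _ ((measurable_const.sub hehat).inv.mul hm0)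
  have hφ5m : StronglyMeasurable[MeasurableSpace.comap X inferInstance] φ5 := hφm _ (hm1.sub hm0)
  have hAint : Integrable A μ := by
    refine Integrable.mono' (integrable_const (1:ℝ)) hA.aestronglyMeasurable ?_
    refine Filter.Eventually.of_forall fun ω => ?_
    rcases hAbin ω with h | h <;> simp [h]
  have hB1int : Integrable (fun ω => Y1 ω * A ω) μ := by
    refine Integrable.mono' hY1int.norm ((hY1.mul hA).aestronglyMeasurable) ?_
    refine Filter.Eventually.of_forall fun ω => ?_
    rcases hAbin ω with h | h <;> simp [h, abs_nonneg]
  have hB0int : Integrable (fun ω => Y0 ω * A ω) μ := by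
    refine Integrable.mono' hY0int.norm ((hY0.mul hA).aestronglyMeasurable) ?_
    refine Filter.Eventually.of_forall fun ω => ?_
    rcases hAbin ω with h | h <;> simp [h, abs_nonneg]
  have hB3int : Integrable (fun ω => Y0 ω * (1 - A ω)) μ := by
    refine Integrable.mono' hY0int.norm ((hY0.mul (measurable_const.sub hA)).aestronglyMeasurable) ?_
    refine Filter.Eventually.of_forall fun ω => ?_
    rcases hAbin ω with h | h <;> simp [h, abs_nonneg]
  have h1mA : Integrable (fun ω => 1 - A ω) μ := (integrable_const (1:ℝ)).sub hAint
  -- conditional expectations of the random factors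
  have hK1 : μ[(fun ω => Y1 ω * A ω)|MeasurableSpace.comap X inferInstance] =ᵐ[μ]
      fun ω => (μ[A|MeasurableSpace.comap X inferInstance]) ω * (μ[Y1|MeasurableSpace.comap X inferInstance]) ω :=
    condexp_mul_binary_of_condIndepFun hm' A hA hAbin Y1 hY1 hY1int hNUC1
  have hK0 : μ[(fun ω => Y0 ω * A ω)|MeasurableSpace.comap X inferInstance] =ᵐ[μ]
      fun ω => (μ[A|MeasurableSpace.comap X inferInstance]) ω * (μ[Y0|MeasurableSpace.comap X inferInstance]) ω :=
    condexp_mul_binary_of_condIndepFun hm' A hA hAbin Y0 hY0 hY0int hNUC0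
  have hE3 : μ[(fun ω => Y0 ω * (1 - A ω))|MeasurableSpace.comap X inferInstance] =ᵐ[μ]
      fun ω => (μ[Y0|MeasurableSpace.comap X inferInstance]) ω - (μ[A|MeasurableSpace.comap X inferInstance]) ω * (μ[Y0|MeasurableSpace.comap X inferInstance]) ω := by
    have heq : (fun ω => Y0 ω * (1 - A ω)) = fun ω => Y0 ω - Y0 ω * A ω :=
      funext fun ω => by ring
    rw [heq]
    have hsub : μ[(fun ω => Y0 ω - Y0 ω * A ω)|MeasurableSpace.comap X inferInstance] =ᵐ[μ]
        fun ω => (μ[Y0|MeasurableSpace.comap X inferInstance]) ω - (μ[(fun ω => Y0 ω * A ω)|MeasurableSpace.comap X inferInstance]) ω :=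
      condExp_sub hY0int hB0int _
    refine hsub.trans ?_
    filter_upwards [hK0] with ω h
    rw [h]
  have hE4 : μ[(fun ω => 1 - A ω)|MeasurableSpace.comap X inferInstance] =ᵐ[μ]
      fun ω => 1 - (μ[A|MeasurableSpace.comap X inferInstance]) ω := by
    have hsub : μ[(fun ω => (1:ℝ) - A ω)|MeasurableSpace.comap X inferInstance] =ᵐ[μ]
        fun ω => (μ[(fun _ : Ω => (1:ℝ))|MeasurableSpace.comap X inferInstance]) ω - (μ[A|MeasurableSpace.comap X inferInstance]) ω :=
      condExp_sub (integrable_const (1:ℝ)) hAint _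
    refine hsub.trans ?_
    rw [condExp_const hm' (1:ℝ)]
  have hc5 : μ[(fun _ : Ω => (1:ℝ))|MeasurableSpace.comap X inferInstance] = fun _ => (1:ℝ) := condExp_const hm' (1:ℝ)
  -- the estimator and its conditional expectation target
  set τf : Ω → ℝ := fun ω =>
      A ω * (Y ω - m1 (X ω)) / ehat (X ω) -
        (1 - A ω) * (Y ω - m0 (X ω)) / (1 - ehat (X ω)) + m1 (X ω) - m0 (X ω) with hτdef
  have hdecomp : ∀ ω, τf ω = φ1 ω * (Y1 ω * A ω) + φ2 ω * A ω +
      φ3 ω * (Y0 ω * (1 - A ω)) + φ4 ω * (1 - A ω) + φ5 ω * 1 := by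
    intro ω
    rcases hAbin ω with h | h <;>
      simp only [hτdef, hφ1, hφ2, hφ3, hφ4, hφ5, hYdef ω, h, div_eq_mul_inv] <;> ring
  set R : Ω → ℝ := fun ω =>
      φ1 ω * ((μ[A|MeasurableSpace.comap X inferInstance]) ω * (μ[Y1|MeasurableSpace.comap X inferInstance]) ω) +
      φ2 ω * (μ[A|MeasurableSpace.comap X inferInstance]) ω +
      φ3 ω * ((μ[Y0|MeasurableSpace.comap X inferInstance]) ω - (μ[A|MeasurableSpace.comap X inferInstance]) ω * (μ[Y0|MeasurableSpace.comap X inferInstance]) ω) +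
      φ4 ω * (1 - (μ[A|MeasurableSpace.comap X inferInstance]) ω) + φ5 ω * 1 with hR
  -- truncation machinery
  set gbd : 𝓧 → ℝ := fun x => |(ehat x)⁻¹| ⊔ (|(ehat x)⁻¹ * m1 x| ⊔
      (|(1 - ehat x)⁻¹| ⊔ (|(1 - ehat x)⁻¹ * m0 x| ⊔ |m1 x - m0 x|))) with hgbd
  have hgbdm : Measurable gbd := by
    refine (hehat.inv.abs).max (((hehat.inv.mul hm1).abs).max
      (((measurable_const.sub hehat).inv.abs).max
        ((((measurable_const.sub hehat).inv.mul hm0).abs).max ((hm1.sub hm0).abs))))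
  have hsn' : ∀ n : ℕ, MeasurableSet[MeasurableSpace.comap X inferInstance] (X ⁻¹' {x | gbd x ≤ (n:ℝ)}) :=
    fun n => ⟨{x | gbd x ≤ (n:ℝ)}, measurableSet_le hgbdm measurable_const, rfl⟩
  have hper : ∀ n : ℕ, ∀ᵐ ω ∂μ,
      (X ⁻¹' {x | gbd x ≤ (n:ℝ)}).indicator (fun _ => (1:ℝ)) ω * (μ[τf|MeasurableSpace.comap X inferInstance]) ω =
      (X ⁻¹' {x | gbd x ≤ (n:ℝ)}).indicator (fun _ => (1:ℝ)) ω * R ω := by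
    intro n
    set χ : Ω → ℝ := (X ⁻¹' {x | gbd x ≤ (n:ℝ)}).indicator (fun _ => (1:ℝ)) with hχ
    have hχ_sm : StronglyMeasurable[MeasurableSpace.comap X inferInstance] χ :=
      StronglyMeasurable.indicator stronglyMeasurable_const (hsn' n)
    have hχ_le : ∀ ω, ‖χ ω‖ ≤ 1 := by
      intro ω
      rw [hχ, Set.indicator_apply]
      split_ifs <;> norm_num
    have hχbd : ∀ (ψ : Ω → ℝ), (∀ ω, ω ∈ X ⁻¹' {x | gbd x ≤ (n:ℝ)} → |ψ ω| ≤ gbd (X ω)) →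
        ∀ ω, ‖χ ω * ψ ω‖ ≤ (n:ℝ) := by
      intro ψ hψ ω
      by_cases hω : ω ∈ X ⁻¹' {x | gbd x ≤ (n:ℝ)}
      · have h1 : gbd (X ω) ≤ (n:ℝ) := hω
        have h2 := hψ ω hω
        simp only [hχ, Set.indicator_of_mem hω, one_mul, Real.norm_eq_abs]
        exact h2.trans h1
      · have hz : χ ω = 0 := by rw [hχ]; exact Set.indicator_of_notMem hω _
        rw [hz, zero_mul, norm_zero]
        exact Nat.cast_nonneg n
    have hb1 : ∀ ω, ‖χ ω * φ1 ω‖ ≤ (n:ℝ) := by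
      refine hχbd φ1 fun ω _ => ?_
      simp only [hφ1, hgbd]
      exact le_sup_left
    have hb2 : ∀ ω, ‖χ ω * φ2 ω‖ ≤ (n:ℝ) := by
      refine hχbd φ2 fun ω _ => ?_
      simp only [hφ2, hgbd, abs_neg]
      exact le_sup_of_le_right le_sup_left
    have hb3 : ∀ ω, ‖χ ω * φ3 ω‖ ≤ (n:ℝ) := by
      refine hχbd φ3 fun ω _ => ?_
      simp only [hφ3, hgbd, abs_neg]
      exact le_sup_of_le_right (le_sup_of_le_right le_sup_left)
    have hb4 : ∀ ω, ‖χ ω * φ4 ω‖ ≤ (n:ℝ) := by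
      refine hχbd φ4 fun ω _ => ?_
      simp only [hφ4, hgbd]
      exact le_sup_of_le_right (le_sup_of_le_right (le_sup_of_le_right le_sup_left))
    have hb5 : ∀ ω, ‖χ ω * φ5 ω‖ ≤ (n:ℝ) := by
      refine hχbd φ5 fun ω _ => ?_
      simp only [hφ5, hgbd]
      exact le_sup_of_le_right (le_sup_of_le_right (le_sup_of_le_right le_sup_right))
    have hpull : ∀ (c B : Ω → ℝ), StronglyMeasurable[MeasurableSpace.comap X inferInstance] c →
        (∀ ω, ‖c ω‖ ≤ (n:ℝ)) → Integrable B μ →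
        μ[(fun ω => c ω * B ω)|MeasurableSpace.comap X inferInstance] =ᵐ[μ] fun ω => c ω * (μ[B|MeasurableSpace.comap X inferInstance]) ω :=
      fun c B hc hbd hB =>
        condExp_stronglyMeasurable_mul_of_bound hm' hc hB (n:ℝ) (ae_of_all _ hbd)
    have hint : ∀ (c B : Ω → ℝ), StronglyMeasurable[MeasurableSpace.comap X inferInstance] c →
        (∀ ω, ‖c ω‖ ≤ (n:ℝ)) → Integrable B μ → Integrable (fun ω => c ω * B ω) μ :=
      fun c B hc hbd hB =>
        hB.bdd_mul ((hc.mono hm').aestronglyMeasurable) (ae_of_all _ hbd)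
    have hψ1m : StronglyMeasurable[MeasurableSpace.comap X inferInstance] (fun ω => χ ω * φ1 ω) := hχ_sm.mul hφ1m
    have hψ2m : StronglyMeasurable[MeasurableSpace.comap X inferInstance] (fun ω => χ ω * φ2 ω) := hχ_sm.mul hφ2m
    have hψ3m : StronglyMeasurable[MeasurableSpace.comap X inferInstance] (fun ω => χ ω * φ3 ω) := hχ_sm.mul hφ3m
    have hψ4m : StronglyMeasurable[MeasurableSpace.comap X inferInstance] (fun ω => χ ω * φ4 ω) := hχ_sm.mul hφ4m
    have hψ5m : StronglyMeasurable[MeasurableSpace.comap X inferInstance] (fun ω => χ ω * φ5 ω) := hχ_sm.mul hφ5m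
    have hLn : μ[(fun ω => χ ω * τf ω)|MeasurableSpace.comap X inferInstance] =ᵐ[μ]
        fun ω => χ ω * (μ[τf|MeasurableSpace.comap X inferInstance]) ω :=
      condExp_stronglyMeasurable_mul_of_bound hm' hχ_sm hτint 1 (ae_of_all _ hχ_le)
    have hsplit : (fun ω => χ ω * τf ω) = fun ω =>
        (χ ω * φ1 ω) * (Y1 ω * A ω) + (χ ω * φ2 ω) * A ω +
        (χ ω * φ3 ω) * (Y0 ω * (1 - A ω)) + (χ ω * φ4 ω) * (1 - A ω) +
        (χ ω * φ5 ω) * 1 := by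
      funext ω
      rw [hdecomp ω]
      ring
    have hsum := condExp_add5 (μ := μ) (m' := MeasurableSpace.comap X inferInstance)
      (fun ω => (χ ω * φ1 ω) * (Y1 ω * A ω)) (fun ω => (χ ω * φ2 ω) * A ω)
      (fun ω => (χ ω * φ3 ω) * (Y0 ω * (1 - A ω))) (fun ω => (χ ω * φ4 ω) * (1 - A ω))
      (fun ω => (χ ω * φ5 ω) * 1)
      (hint _ _ hψ1m hb1 hB1int) (hint _ _ hψ2m hb2 hAint)
      (hint _ _ hψ3m hb3 hB3int) (hint _ _ hψ4m hb4 h1mA)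
      (hint _ _ hψ5m hb5 (integrable_const 1))
    have hp1 := hpull _ _ hψ1m hb1 hB1int
    have hp2 := hpull _ _ hψ2m hb2 hAint
    have hp3 := hpull _ _ hψ3m hb3 hB3int
    have hp4 := hpull _ _ hψ4m hb4 h1mA
    have hp5 := hpull _ _ hψ5m hb5 (integrable_const (1:ℝ))
    have hRn : μ[(fun ω => χ ω * τf ω)|MeasurableSpace.comap X inferInstance] =ᵐ[μ] fun ω => χ ω * R ω := by
      rw [hsplit]
      refine hsum.trans ?_
      filter_upwards [hp1, hp2, hp3, hp4, hp5, hK1, hE3, hE4] with ω w1 w2 w3 w4 w5 k1 k3 k4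
      rw [w1, w2, w3, w4, w5, k1, k3, k4, hc5, hR]
      simp only [hφ1, hφ2, hφ3, hφ4, hφ5]
      ring
    filter_upwards [hLn.symm.trans hRn] with ω h
    exact h
  have hcov : ∀ ω, ∃ n : ℕ, gbd (X ω) ≤ (n:ℝ) := fun ω => exists_nat_ge _
  have hmain : μ[τf|MeasurableSpace.comap X inferInstance] =ᵐ[μ] R := by
    have hae := (ae_all_iff).mpr hper
    filter_upwards [hae] with ω hω
    obtain ⟨n, hn⟩ := hcov ω
    have hmem : ω ∈ X ⁻¹' {x | gbd x ≤ (n:ℝ)} := hn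
    have hχ1 : (X ⁻¹' {x | gbd x ≤ (n:ℝ)}).indicator (fun _ => (1:ℝ)) ω = 1 :=
      Set.indicator_of_mem hmem _
    have h := hω n
    rw [hχ1, one_mul, one_mul] at h
    exact h
  have hrhs : μ[(fun ω => Y1 ω - Y0 ω)|MeasurableSpace.comap X inferInstance] =ᵐ[μ]
      fun ω => (μ[Y1|MeasurableSpace.comap X inferInstance]) ω - (μ[Y0|MeasurableSpace.comap X inferInstance]) ω :=
    condExp_sub hY1int hY0int _
  have hfinal : R =ᵐ[μ] fun ω => (μ[Y1|MeasurableSpace.comap X inferInstance]) ω - (μ[Y0|MeasurableSpace.comap X inferInstance]) ω := by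
    rcases hmodels with hee | ⟨hmm1, hmm0⟩
    · filter_upwards [hedef, hee, hehatpos] with ω h1 h2 h3
      have hne : ehat (X ω) ≠ 0 := ne_of_gt h3.1
      have hne2 : (1:ℝ) - ehat (X ω) ≠ 0 := sub_ne_zero_of_ne (Ne.symm (ne_of_lt h3.2))
      rw [hR]
      simp only [hφ1, hφ2, hφ3, hφ4, hφ5]
      rw [h1, ← h2]
      field_simp
      ring
    · filter_upwards [hmm1, hmm0] with ω h1 h0
      rw [hR]
      simp only [hφ1, hφ2, hφ3, hφ4, hφ5]
      rw [h1, h0]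
      ring
  exact hmain.trans (hfinal.trans hrhs.symm)
end
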